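/- arXiv:2312.15917 — 4 statements merged into one kernel-verified Lean document; each statement's English description precedes it below -/
import Mathlib

section
/- Let N ≥ 3, p̂ = 2 + 4/N < p < 2N/(N−2) = 2*, γ_p = N(p−2)/(2p), μ > 0, σ₃ > 0 with σ₃ < pγ_p/2 − 1. Suppose V : ℝᴺ → ℝ satisfies V ≤ 0, and u ∈ H¹(ℝᴺ) satisfies the Pohozaev identity ‖∇u‖₂² + (N/2)∫ V u² + ∫ V u (∇u·x) = μγ_p ‖u‖_p^p + ‖u‖_{2*}^{2*}, together with |∫ V u (∇u·x) dx| ≤ σ₃ ‖∇u‖₂² and N ≥ pγ_p. Then the energy J(u) = (1/2)‖∇u‖₂² + (1/2)∫ V u² − (μ/p)‖u‖_p^p − (1/2*)‖u‖_{2*}^{2*} satisfies J(u) ≥ 0. -/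
open MeasureTheory

set_option maxHeartbeats 1000000

theorem stmt_4 (N : ℕ) (hN : 3 ≤ N) (p : ℝ) (hp1 : 2 + 4 / N < p) (hp2 : p < 2 * N / (N - 2))
    (μ σ₃ : ℝ) (hμ : 0 < μ) (hσ₃ : 0 < σ₃)
    (hσ₃' : σ₃ < p * (N * (p - 2) / (2 * p)) / 2 - 1)
    (V : EuclideanSpace ℝ (Fin N) → ℝ) (hVneg : ∀ x, V x ≤ 0)
    (u : EuclideanSpace ℝ (Fin N) → ℝ)
    (hu2 : MemLp u 2 volume) (hud : Differentiable ℝ u)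
    (hug : MemLp (fun x => ‖fderiv ℝ u x‖) 2 volume)
    -- Pohozaev identity
    (hpoho : (∫ x, ‖fderiv ℝ u x‖ ^ 2) + (N / 2 : ℝ) * (∫ x, V x * (u x) ^ 2)
          + (∫ x, V x * u x * (fderiv ℝ u x x))
        = μ * (N * (p - 2) / (2 * p)) * (∫ x, |u x| ^ p)
          + ∫ x, |u x| ^ (2 * N / (N - 2)))
    (hmix : |∫ x, V x * u x * (fderiv ℝ u x x)| ≤ σ₃ * ∫ x, ‖fderiv ℝ u x‖ ^ 2)
    (hNp : p * (N * (p - 2) / (2 * p)) ≤ N) :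
    (1 / 2 : ℝ) * (∫ x, ‖fderiv ℝ u x‖ ^ 2) + (1 / 2 : ℝ) * (∫ x, V x * (u x) ^ 2)
      - (μ / p) * (∫ x, |u x| ^ p)
      - (1 / (2 * N / (N - 2))) * (∫ x, |u x| ^ (2 * N / (N - 2))) ≥ 0 := by
  have hNr : (3:ℝ) ≤ (N:ℝ) := by exact_mod_cast hN
  have hN0 : (0:ℝ) < (N:ℝ) := by linarith
  have hN2 : (0:ℝ) < (N:ℝ) - 2 := by linarith
  have hp0 : 0 < p := by
    have : 0 < 4 / (N:ℝ) := by positivity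
    linarith
  set γ := (N:ℝ) * (p - 2) / (2 * p) with hγ
  set a := p * γ with ha
  set q := 2 * (N:ℝ) / ((N:ℝ) - 2) with hq
  set G := ∫ x, ‖fderiv ℝ u x‖ ^ 2 with hGdef
  set Vq := ∫ x, V x * (u x) ^ 2 with hVqdef
  set M := ∫ x, V x * u x * (fderiv ℝ u x x) with hMdef
  set P := ∫ x, |u x| ^ p with hPdef
  set S := ∫ x, |u x| ^ (2 * N / (N - 2)) with hSdef
  have haeq : a = (N:ℝ) * (p - 2) / 2 := by
    rw [ha, hγ]; field_simp
  have ha2 : 2 < a := by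
    have h4 : 4 < (N:ℝ) * (p - 2) := by
      have : 4 / (N:ℝ) < p - 2 := by linarith
      calc (4:ℝ) = (N:ℝ) * (4 / (N:ℝ)) := by field_simp
        _ < (N:ℝ) * (p - 2) := by
          exact mul_lt_mul_of_pos_left this hN0
    rw [haeq]; linarith
  have ha0 : 0 < a := by linarith
  have hq0 : 0 < q := by rw [hq]; positivity
  have haq : a < q := by
    rw [haeq, hq, lt_div_iff₀ hN2]
    have hpN : p * ((N:ℝ) - 2) < 2 * (N:ℝ) := by
      rw [← lt_div_iff₀ hN2] at *
      exact hp2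
    nlinarith
  have hG0 : 0 ≤ G := integral_nonneg fun x => by positivity
  have hP0 : 0 ≤ P := integral_nonneg fun x => by positivity
  have hS0 : 0 ≤ S := integral_nonneg fun x => by positivity
  have hVq0 : Vq ≤ 0 := by
    apply integral_nonpos
    intro x
    simp only [Pi.zero_apply]
    nlinarith [sq_nonneg (u x), hVneg x]
  obtain ⟨hM1, hM2⟩ := abs_le.mp hmix
  clear_value G Vq M P S
  clear_value γ a q
  -- Step 1: the RHS of Pohozaev dominates the nonlinear energy terms times a
  have hμγ : μ * γ * P = (μ / p) * a * P := by
    rw [ha]; field_simp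
  have hstep1 : (μ / p) * P + (1 / q) * S ≤ (1 / a) * (μ * γ * P + S) := by
    rw [hμγ]
    have h1 : (1 / a) * ((μ / p) * a * P) = (μ / p) * P := by
      field_simp
    have h2 : (1 / q) * S ≤ (1 / a) * S := by
      apply mul_le_mul_of_nonneg_right _ hS0
      exact one_div_le_one_div_of_le ha0 haq.le
    linarith [h1, h2, mul_add (1/a) ((μ/p)*a*P) S]
  -- Step 2: bound the Pohozaev RHS using |M| ≤ σ₃ G, V ≤ 0, a ≤ N
  have hstep2 : G + ((N:ℝ) / 2) * Vq + M ≤ (a / 2) * G + (a / 2) * Vq := by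
    have hMG : M ≤ (a / 2 - 1) * G := by
      have : σ₃ * G ≤ (a / 2 - 1) * G := by
        apply mul_le_mul_of_nonneg_right _ hG0
        linarith [hσ₃']
      linarith
    have hVN : ((N:ℝ) / 2) * Vq ≤ (a / 2) * Vq :=
      mul_le_mul_of_nonpos_right (by linarith) hVq0
    linarith
  have hstep3 : (1 / a) * (μ * γ * P + S) ≤ (1 / 2) * G + (1 / 2) * Vq := by
    rw [← hpoho]
    calc (1 / a) * (G + ((N:ℝ) / 2) * Vq + M)
        ≤ (1 / a) * ((a / 2) * G + (a / 2) * Vq) := by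
          apply mul_le_mul_of_nonneg_left hstep2 (by positivity)
      _ = (1 / 2) * G + (1 / 2) * Vq := by field_simp
  linarith [hstep1, hstep3]
end

section
/- Let N ≥ 3, μ > 0, a > 0, p̂ = 2 + 4/N ≤ p < 2* = 2N/(N−2), γ_p = N(p−2)/(2p). Assume σ₁ ∈ (0,1) if p > p̂, or σ₁ < 1 − (2μ/p̂) C_{N,p̂}^{p̂} a^{4/N} if p = p̂, where C_{N,p} is the optimal Gagliardo–Nirenberg constant. Suppose V ≤ 0 and ∫|V|u² ≤ σ₁‖∇u‖₂² for all u ∈ H¹. Then there exist k₀ > 0 and β > 0 such that for every u ∈ H¹(ℝᴺ) with ‖u‖₂ = a and ‖∇u‖₂ = k₀, the energy J(u) = (1/2)‖∇u‖₂² + (1/2)∫Vu² − (μ/p)‖u‖_p^p − (1/2*)‖u‖_{2*}^{2*} satisfies J(u) ≥ β. -/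
lemma aux_small (A ε t : ℝ) (hA : 0 < A) (hε : 0 < ε) (ht : 0 < t) :
    ∃ δ : ℝ, 0 < δ ∧ ∀ k : ℝ, 0 < k → k ≤ δ → A * k ^ t ≤ ε := by
  refine ⟨(ε / A) ^ (1 / t), Real.rpow_pos_of_pos (div_pos hε hA) _, fun k hk hkδ => ?_⟩
  have h1 : k ^ t ≤ ((ε / A) ^ (1 / t)) ^ t := Real.rpow_le_rpow hk.le hkδ ht.le
  rw [← Real.rpow_mul (div_pos hε hA).le, one_div_mul_cancel ht.ne', Real.rpow_one] at h1
  calc A * k ^ t ≤ A * (ε / A) := by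
        exact mul_le_mul_of_nonneg_left h1 hA.le
    _ = ε := by field_simp

lemma aux_key (D A B r q : ℝ) (hA : 0 < A) (hB : 0 < B) (hq : 2 < q)
    (h : (2 < r ∧ 0 < D) ∨ (r = 2 ∧ A < D)) :
    ∃ k₀ > (0:ℝ), ∃ β > (0:ℝ), D * k₀ ^ (2:ℝ) - A * k₀ ^ r - B * k₀ ^ q ≥ β := by
  rcases h with ⟨hr, hD⟩ | ⟨hr, hAD⟩
  · obtain ⟨δ₁, hδ₁, h₁⟩ := aux_small A (D/4) (r-2) hA (by linarith) (by linarith)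
    obtain ⟨δ₂, hδ₂, h₂⟩ := aux_small B (D/4) (q-2) hB (by linarith) (by linarith)
    set k := min δ₁ δ₂ with hkdef
    have hk : 0 < k := lt_min hδ₁ hδ₂
    refine ⟨k, hk, (D/2) * k ^ (2:ℝ), mul_pos (by linarith) (Real.rpow_pos_of_pos hk 2), ?_⟩
    have e1 : k ^ r = k ^ (r-2) * k ^ (2:ℝ) := by
      rw [← Real.rpow_add hk]; ring_nf
    have e2 : k ^ q = k ^ (q-2) * k ^ (2:ℝ) := by
      rw [← Real.rpow_add hk]; ring_nf
    have b1 := h₁ k hk (min_le_left _ _)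
    have b2 := h₂ k hk (min_le_right _ _)
    have hk2 : (0:ℝ) < k ^ (2:ℝ) := Real.rpow_pos_of_pos hk 2
    rw [e1, e2]
    nlinarith [mul_le_mul_of_nonneg_right b1 hk2.le, mul_le_mul_of_nonneg_right b2 hk2.le]
  · obtain ⟨δ, hδ, h₂⟩ := aux_small B ((D-A)/2) (q-2) hB (by linarith) (by linarith)
    refine ⟨δ, hδ, ((D-A)/2) * δ ^ (2:ℝ), mul_pos (by linarith) (Real.rpow_pos_of_pos hδ 2), ?_⟩
    have e2 : δ ^ q = δ ^ (q-2) * δ ^ (2:ℝ) := by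
      rw [← Real.rpow_add hδ]; ring_nf
    have b2 := h₂ δ hδ le_rfl
    have hk2 : (0:ℝ) < δ ^ (2:ℝ) := Real.rpow_pos_of_pos hδ 2
    rw [hr, e2]
    nlinarith [mul_le_mul_of_nonneg_right b2 hk2.le]



open MeasureTheory

/-- Membership in the Sobolev space `H¹(ℝᴺ)`. -/
def H1 (N : ℕ) (u : EuclideanSpace ℝ (Fin N) → ℝ) : Prop :=
  MemLp u 2 volume ∧ Differentiable ℝ u ∧ MemLp (fun x => ‖fderiv ℝ u x‖) 2 volume

set_option maxHeartbeats 1000000 in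
theorem stmt_7 (N : ℕ) (hN : 3 ≤ N) (p : ℝ) (hp1 : 2 + 4 / N ≤ p) (hp2 : p < 2 * N / (N - 2))
    (μ a σ₁ C S : ℝ) (hμ : 0 < μ) (ha : 0 < a) (hσ₁pos : 0 < σ₁) (hC : 0 < C) (hS : 0 < S)
    -- Gagliardo–Nirenberg inequality with constant C = C_{N,p}
    (hGN : ∀ u : EuclideanSpace ℝ (Fin N) → ℝ, H1 N u →
      (∫ x, |u x| ^ p) ^ (1 / p)
        ≤ C * ((∫ x, (u x) ^ 2) ^ (1 / 2 : ℝ)) ^ (1 - N * (p - 2) / (2 * p))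
            * ((∫ x, ‖fderiv ℝ u x‖ ^ 2) ^ (1 / 2 : ℝ)) ^ (N * (p - 2) / (2 * p)))
    -- Sobolev inequality with constant S
    (hSob : ∀ u : EuclideanSpace ℝ (Fin N) → ℝ, H1 N u →
      S * ((∫ x, |u x| ^ (2 * N / (N - 2))) ^ ((N - 2) / (2 * N) : ℝ)) ^ 2
        ≤ ∫ x, ‖fderiv ℝ u x‖ ^ 2)
    (hσ₁ : (2 + 4 / N < p → σ₁ < 1) ∧
      (p = 2 + 4 / N → σ₁ < 1 - (2 * μ / (2 + 4 / N)) * C ^ (2 + 4 / (N : ℝ)) * a ^ (4 / (N : ℝ))))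
    (V : EuclideanSpace ℝ (Fin N) → ℝ) (hVneg : ∀ x, V x ≤ 0)
    (hV : ∀ u : EuclideanSpace ℝ (Fin N) → ℝ, H1 N u →
      (∫ x, |V x| * (u x) ^ 2) ≤ σ₁ * ∫ x, ‖fderiv ℝ u x‖ ^ 2) :
    ∃ k₀ > (0 : ℝ), ∃ β > (0 : ℝ),
      ∀ u : EuclideanSpace ℝ (Fin N) → ℝ, H1 N u →
        (∫ x, (u x) ^ 2) = a ^ 2 →
        Real.sqrt (∫ x, ‖fderiv ℝ u x‖ ^ 2) = k₀ →
        (1 / 2 : ℝ) * (∫ x, ‖fderiv ℝ u x‖ ^ 2) + (1 / 2 : ℝ) * (∫ x, V x * (u x) ^ 2)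
          - (μ / p) * (∫ x, |u x| ^ p)
          - (1 / (2 * N / (N - 2))) * (∫ x, |u x| ^ (2 * N / (N - 2))) ≥ β := by
  -- Basic numeric facts
  have hN3 : (3:ℝ) ≤ (N:ℝ) := by exact_mod_cast hN
  have hNpos : (0:ℝ) < (N:ℝ) := by linarith
  have hN2 : (0:ℝ) < (N:ℝ) - 2 := by linarith
  set q : ℝ := 2 * (N:ℝ) / ((N:ℝ) - 2) with hqdef
  have hq2 : 2 < q := by
    rw [hqdef, lt_div_iff₀ hN2]; linarith
  have hqpos : 0 < q := by linarith
  have hp2' : (2:ℝ) < p := by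
    have h4N : (0:ℝ) < 4 / N := by positivity
    linarith
  have hppos : (0:ℝ) < p := by linarith
  set γ : ℝ := (N:ℝ) * (p - 2) / (2 * p) with hγdef
  set r : ℝ := (N:ℝ) * (p - 2) / 2 with hrdef
  have hγp : γ * p = r := by
    rw [hγdef, hrdef]; field_simp
  set M : ℝ := C * a ^ (1 - γ) with hMdef
  have hM : 0 < M := mul_pos hC (Real.rpow_pos_of_pos ha _)
  set A : ℝ := μ / p * M ^ p with hAdef
  have hA : 0 < A := mul_pos (div_pos hμ hppos) (Real.rpow_pos_of_pos hM _)
  set B : ℝ := 1 / q * (S ^ (q / 2))⁻¹ with hBdef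
  have hB : 0 < B := by
    apply mul_pos (by positivity)
    exact inv_pos.mpr (Real.rpow_pos_of_pos hS _)
  set D : ℝ := (1 - σ₁) / 2 with hDdef
  -- The key dichotomy
  have hdich : (2 < r ∧ 0 < D) ∨ (r = 2 ∧ A < D) := by
    rcases eq_or_lt_of_le hp1 with hcrit | hlt
    · right
      have hpc : p = 2 + 4 / N := hcrit.symm
      have hr2 : r = 2 := by
        rw [hrdef, hpc]; field_simp; ring
      have hexp : (1 - γ) * p = 4 / (N:ℝ) := by
        rw [hγdef, hpc]; field_simp; ring
      have hMp : M ^ p = C ^ p * a ^ (4 / (N:ℝ)) := by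
        rw [hMdef, Real.mul_rpow hC.le (Real.rpow_nonneg ha.le _),
          ← Real.rpow_mul ha.le, hexp]
      have hs := hσ₁.2 hpc
      rw [← hpc] at hs
      refine ⟨hr2, ?_⟩
      have hring : 2 * μ / p * C ^ p * a ^ (4 / (N:ℝ))
          = 2 * (μ / p * (C ^ p * a ^ (4 / (N:ℝ)))) := by ring
      rw [hring] at hs
      rw [hAdef, hMp, hDdef]
      linarith
    · left
      have hσ : σ₁ < 1 := hσ₁.1 hlt
      constructor
      · have h1 : (N:ℝ) * (2 + 4 / N) < N * p := by
          exact mul_lt_mul_of_pos_left hlt hNpos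
        have h2 : (N:ℝ) * (2 + 4 / N) = 2 * N + 4 := by field_simp
        rw [hrdef]
        rw [lt_div_iff₀ (by norm_num : (0:ℝ) < 2)]
        nlinarith
      · rw [hDdef]; linarith
  obtain ⟨k₀, hk₀, β, hβ, hkey⟩ := aux_key D A B r q hA hB hq2 hdich
  refine ⟨k₀, hk₀, β, hβ, fun u hu hU hk => ?_⟩
  set I : ℝ := ∫ x, ‖fderiv ℝ u x‖ ^ 2 with hIdef
  have hI0 : 0 ≤ I := integral_nonneg fun x => by positivity
  have hIk : I = k₀ ^ 2 := by
    rw [← hk, Real.sq_sqrt hI0]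
  have hk2ℝ : k₀ ^ (2:ℝ) = k₀ ^ (2:ℕ) := by
    rw [← Real.rpow_natCast k₀ 2]; norm_num
  -- potential term
  have hW : -(σ₁ * I) ≤ ∫ x, V x * (u x) ^ 2 := by
    have heq : (fun x => V x * (u x) ^ 2) = fun x => -(|V x| * (u x) ^ 2) := by
      funext x; rw [abs_of_nonpos (hVneg x)]; ring
    rw [heq, integral_neg]
    exact neg_le_neg (hV u hu)
  -- GN term
  have hX0 : 0 ≤ ∫ x, |u x| ^ p := integral_nonneg fun x => Real.rpow_nonneg (abs_nonneg _) _
  have hXbound : μ / p * (∫ x, |u x| ^ p) ≤ A * k₀ ^ r := by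
    have hgn := hGN u hu
    have ha2 : ((∫ x, (u x) ^ 2 : ℝ)) ^ (1/2 : ℝ) = a := by
      rw [hU, ← Real.rpow_natCast a 2, ← Real.rpow_mul ha.le]
      norm_num
    have hi2 : (I ^ (1/2 : ℝ)) = k₀ := by
      rw [hIk, ← Real.rpow_natCast k₀ 2, ← Real.rpow_mul hk₀.le]
      norm_num
    rw [ha2] at hgn
    rw [← hIdef] at hgn
    rw [hi2] at hgn
    have hstep : (∫ x, |u x| ^ p) ≤ (M * k₀ ^ γ) ^ p := by
      have h1 : ((∫ x, |u x| ^ p) ^ (1/p : ℝ)) ^ p ≤ (C * a ^ (1-γ) * k₀ ^ γ) ^ p :=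
        Real.rpow_le_rpow (Real.rpow_nonneg hX0 _) hgn hppos.le
      rwa [← Real.rpow_mul hX0, one_div_mul_cancel hppos.ne', Real.rpow_one, ← hMdef] at h1
    have hsplit : (M * k₀ ^ γ) ^ p = M ^ p * k₀ ^ r := by
      rw [Real.mul_rpow hM.le (Real.rpow_nonneg hk₀.le _), ← Real.rpow_mul hk₀.le, hγp]
    rw [hsplit] at hstep
    calc μ / p * (∫ x, |u x| ^ p) ≤ μ / p * (M ^ p * k₀ ^ r) :=
          mul_le_mul_of_nonneg_left hstep (by positivity)
      _ = A * k₀ ^ r := by rw [hAdef]; ring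
  -- Sobolev term
  have hY0 : 0 ≤ ∫ x, |u x| ^ (2 * N / (N - 2)) :=
    integral_nonneg fun x => by positivity
  have hYbound : 1 / q * (∫ x, |u x| ^ (2 * N / (N - 2))) ≤ B * k₀ ^ q := by
    have hsob := hSob u hu
    rw [← hIdef, hIk] at hsob
    have he : ((N:ℝ) - 2) / (2 * (N:ℝ)) = 1 / q := by
      rw [hqdef]; field_simp
    rw [he] at hsob
    set Y : ℝ := ∫ x, |u x| ^ (2 * N / (N - 2)) with hYdef
    have h1 : (Y ^ (1/q : ℝ)) ^ (2:ℕ) = Y ^ (2/q : ℝ) := by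
      rw [← Real.rpow_natCast (Y ^ (1/q : ℝ)) 2, ← Real.rpow_mul hY0,
        show (1/q * ((2:ℕ):ℝ)) = 2/q by push_cast; ring]
    rw [h1] at hsob
    have h2 : Y ^ (2/q : ℝ) ≤ k₀ ^ 2 / S := by
      rw [le_div_iff₀ hS]; linarith
    have h3 : (Y ^ (2/q : ℝ)) ^ (q/2 : ℝ) ≤ (k₀ ^ 2 / S) ^ (q/2 : ℝ) :=
      Real.rpow_le_rpow (Real.rpow_nonneg hY0 _) h2 (by positivity)
    have h4 : (Y ^ (2/q : ℝ)) ^ (q/2 : ℝ) = Y := by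
      rw [← Real.rpow_mul hY0,
        show (2/q * (q/2) : ℝ) = 1 by field_simp]
      exact Real.rpow_one Y
    have h5 : (k₀ ^ 2 / S) ^ (q/2 : ℝ) = k₀ ^ q / S ^ (q/2 : ℝ) := by
      rw [Real.div_rpow (by positivity) hS.le, ← Real.rpow_natCast k₀ 2,
        ← Real.rpow_mul hk₀.le,
        show ((2:ℕ):ℝ) * (q/2) = q by push_cast; field_simp]
    rw [h4, h5] at h3
    calc 1 / q * Y ≤ 1 / q * (k₀ ^ q / S ^ (q/2 : ℝ)) :=
          mul_le_mul_of_nonneg_left h3 (by positivity)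
      _ = B * k₀ ^ q := by rw [hBdef]; ring
  rw [hIk] at hW ⊢
  rw [hk2ℝ, hDdef] at hkey
  nlinarith [hW, hXbound, hYbound, hkey]
end

section
/- Let N ≥ 3, 2 + 4/N ≤ p < 2N/(N−2), μ, a > 0, and define for u ∈ S_a = {u ∈ H¹(ℝᴺ) : ‖u‖₂ = a} the functional J_μ(u) = (1/2)‖∇u‖₂² − (μ/p)‖u‖_p^p − (1/2*)‖u‖_{2*}^{2*}, and m_a = inf over the Pohozaev manifold P_μ = {u ∈ S_a : ‖∇u‖₂² = μγ_p‖u‖_p^p + ‖u‖_{2*}^{2*}} of J_μ. Assume m_a = inf_{u∈S_a} max_{h>0} J_μ(u_h) where u_h(x) = h^{N/2}u(hx). Then a ↦ m_a is non-increasing: if 0 < a₁ < a₂ then m_{a₂} ≤ m_{a₁}. -/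
open MeasureTheory

/-- The mass-preserving scaling `u_h(x) = h^{N/2} u(hx)`. -/
noncomputable def scale (N : ℕ) (u : EuclideanSpace ℝ (Fin N) → ℝ) (h : ℝ) :
    EuclideanSpace ℝ (Fin N) → ℝ :=
  fun x => h ^ ((N : ℝ) / 2) * u (h • x)

/-- The energy functional `J_μ`. -/
noncomputable def Jfun (N : ℕ) (μ p : ℝ) (u : EuclideanSpace ℝ (Fin N) → ℝ) : ℝ :=
  (1 / 2 : ℝ) * (∫ x, ‖fderiv ℝ u x‖ ^ 2) - (μ / p) * (∫ x, |u x| ^ p)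
    - (1 / (2 * N / (N - 2))) * (∫ x, |u x| ^ (2 * N / (N - 2)))

/-! ### Auxiliary integral-scaling lemmas -/

lemma int_comp_smul (N : ℕ) (f : EuclideanSpace ℝ (Fin N) → ℝ) (θ : ℝ) (hθ : 0 < θ) :
    ∫ x, f (θ • x) = (θ ^ (N:ℝ))⁻¹ * ∫ x, f x := by
  have := Measure.integral_comp_smul (volume : Measure (EuclideanSpace ℝ (Fin N))) f θ
  simp only [finrank_euclideanSpace_fin, smul_eq_mul] at this
  rw [this, abs_of_nonneg (by positivity), ← Real.rpow_natCast θ N]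

lemma fderiv_norm_eq (N : ℕ) (u : EuclideanSpace ℝ (Fin N) → ℝ) (hu : Differentiable ℝ u)
    (c θ : ℝ) (x : EuclideanSpace ℝ (Fin N)) :
    ‖fderiv ℝ (fun x => c * u (θ • x)) x‖ = |c| * |θ| * ‖fderiv ℝ u (θ • x)‖ := by
  have hsm : HasFDerivAt (fun y : EuclideanSpace ℝ (Fin N) => θ • y)
      (θ • ContinuousLinearMap.id ℝ (EuclideanSpace ℝ (Fin N))) x :=
    (ContinuousLinearMap.id ℝ _).hasFDerivAt.const_smul θ
  have h1 : HasFDerivAt (fun y => u (θ • y))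
      ((fderiv ℝ u (θ • x)).comp (θ • ContinuousLinearMap.id ℝ _)) x :=
    (hu (θ • x)).hasFDerivAt.comp x hsm
  have h2 : HasFDerivAt (fun y => c * u (θ • y))
      (c • ((fderiv ℝ u (θ • x)).comp (θ • ContinuousLinearMap.id ℝ _))) x := h1.const_mul c
  rw [h2.fderiv, ContinuousLinearMap.comp_smul]
  simp [norm_smul, abs_mul, mul_assoc]

lemma int_grad_scale (N : ℕ) (u : EuclideanSpace ℝ (Fin N) → ℝ) (hu : Differentiable ℝ u)
    (h : ℝ) (hh : 0 < h) :
    ∫ x, ‖fderiv ℝ (scale N u h) x‖ ^ 2 = h ^ (2:ℝ) * ∫ x, ‖fderiv ℝ u x‖ ^ 2 := by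
  have key : ∀ x, ‖fderiv ℝ (scale N u h) x‖ ^ 2
      = (h ^ ((N:ℝ)/2) * h) ^ 2 * (fun y => ‖fderiv ℝ u y‖ ^ 2) (h • x) := by
    intro x
    rw [show scale N u h = fun x => (h ^ ((N:ℝ)/2)) * u (h • x) from rfl,
      fderiv_norm_eq N u hu _ h x, abs_of_nonneg (by positivity : (0:ℝ) ≤ h ^ ((N:ℝ)/2)),
      abs_of_nonneg hh.le]
    ring
  rw [integral_congr_ae (Filter.Eventually.of_forall key), integral_const_mul,
    int_comp_smul N (fun y => ‖fderiv ℝ u y‖ ^ 2) h hh]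
  have hc : (h ^ ((N:ℝ)/2) * h) ^ 2 = h ^ ((N:ℝ) + 2) := by
    rw [mul_pow, ← Real.rpow_natCast (h ^ ((N:ℝ)/2)) 2, ← Real.rpow_mul hh.le,
      ← Real.rpow_natCast h 2, ← Real.rpow_add hh]
    norm_num
  rw [hc, ← mul_assoc, ← Real.rpow_neg hh.le, ← Real.rpow_add hh]
  ring_nf

lemma int_abs_scale (N : ℕ) (u : EuclideanSpace ℝ (Fin N) → ℝ) (h r : ℝ)
    (hh : 0 < h) :
    ∫ x, |scale N u h x| ^ r = h ^ ((N:ℝ) * r / 2 - N) * ∫ x, |u x| ^ r := by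
  have key : ∀ x, |scale N u h x| ^ r
      = h ^ ((N:ℝ) * r / 2) * (fun y => |u y| ^ r) (h • x) := by
    intro x
    show |h ^ ((N:ℝ)/2) * u (h • x)| ^ r = _
    rw [abs_mul, Real.mul_rpow (abs_nonneg _) (abs_nonneg _),
      abs_of_nonneg (by positivity : (0:ℝ) ≤ h ^ ((N:ℝ)/2)), ← Real.rpow_mul hh.le]
    ring_nf
  rw [integral_congr_ae (Filter.Eventually.of_forall key), integral_const_mul,
    int_comp_smul N (fun y => |u y| ^ r) h hh, ← mul_assoc, ← Real.rpow_neg hh.le,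
    ← Real.rpow_add hh]
  ring_nf

lemma fderiv_norm_constmul (N : ℕ) (u : EuclideanSpace ℝ (Fin N) → ℝ)
    (hu : Differentiable ℝ u) (θ : ℝ) (x : EuclideanSpace ℝ (Fin N)) :
    ‖fderiv ℝ (fun y => θ * u y) x‖ = |θ| * ‖fderiv ℝ u x‖ := by
  rw [((hu x).hasFDerivAt.const_mul θ).fderiv, norm_smul, Real.norm_eq_abs]

lemma int_grad_constmul (N : ℕ) (u : EuclideanSpace ℝ (Fin N) → ℝ)
    (hu : Differentiable ℝ u) (θ : ℝ) (hθ : 0 ≤ θ) :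
    ∫ x, ‖fderiv ℝ (fun y => θ * u y) x‖ ^ 2 = θ ^ (2:ℝ) * ∫ x, ‖fderiv ℝ u x‖ ^ 2 := by
  have : ∀ x, ‖fderiv ℝ (fun y => θ * u y) x‖ ^ 2 = θ ^ (2:ℝ) * ‖fderiv ℝ u x‖ ^ 2 := by
    intro x
    rw [fderiv_norm_constmul N u hu θ x, mul_pow, abs_of_nonneg hθ, Real.rpow_two]
  rw [integral_congr_ae (Filter.Eventually.of_forall this), integral_const_mul]

lemma int_abs_constmul (N : ℕ) (u : EuclideanSpace ℝ (Fin N) → ℝ) (θ r : ℝ) (hθ : 0 ≤ θ) :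
    ∫ x, |θ * u x| ^ r = θ ^ r * ∫ x, |u x| ^ r := by
  have : ∀ x, |θ * u x| ^ r = θ ^ r * |u x| ^ r := by
    intro x
    rw [abs_mul, Real.mul_rpow (abs_nonneg _) (abs_nonneg _), abs_of_nonneg hθ]
  rw [integral_congr_ae (Filter.Eventually.of_forall this), integral_const_mul]

lemma int_sq_constmul (N : ℕ) (u : EuclideanSpace ℝ (Fin N) → ℝ) (θ : ℝ) :
    ∫ x, (θ * u x) ^ 2 = θ ^ 2 * ∫ x, (u x) ^ 2 := by
  have : ∀ x, (θ * u x) ^ 2 = θ ^ 2 * (u x) ^ 2 := fun x => by ring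
  rw [integral_congr_ae (Filter.Eventually.of_forall this), integral_const_mul]

lemma H1_constmul (N : ℕ) (u : EuclideanSpace ℝ (Fin N) → ℝ) (θ : ℝ) (hu : H1 N u) :
    H1 N (fun x => θ * u x) := by
  refine ⟨hu.1.const_mul θ, hu.2.1.const_mul θ, ?_⟩
  have : (fun x => ‖fderiv ℝ (fun y => θ * u y) x‖)
      = fun x => |θ| * ‖fderiv ℝ u x‖ :=
    funext (fderiv_norm_constmul N u hu.2.1 θ)
  rw [this]
  exact hu.2.2.const_mul _

lemma diff_scale (N : ℕ) (u : EuclideanSpace ℝ (Fin N) → ℝ) (hu : Differentiable ℝ u)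
    (h : ℝ) : Differentiable ℝ (scale N u h) :=
  (hu.comp (differentiable_id.const_smul h)).const_mul _

/-! ### Real-analysis lemmas about `sSup` of fiber maps -/

open Set

lemma bdd_transfer {f g : ℝ → ℝ} (hfg : ∀ h ∈ Ioi (0:ℝ), f h ≤ g h)
    (hg : BddAbove (g '' Ioi 0)) : BddAbove (f '' Ioi 0) := by
  obtain ⟨M, hM⟩ := hg
  exact ⟨M, by rintro _ ⟨h, hh, rfl⟩; exact (hfg h hh).trans (hM ⟨h, hh, rfl⟩)⟩

lemma bddAbove_aux (c₁ c : ℝ) (hc : 0 < c) (e : ℝ) (he : 2 < e) :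
    BddAbove ((fun h => c₁ * h ^ (2:ℝ) - c * h ^ e) '' Ioi 0) := by
  obtain ⟨R, hR1, hRb⟩ : ∃ R : ℝ, 1 ≤ R ∧ ((|c₁| + 1) / c) ^ (1 / (e - 2)) ≤ R :=
    ⟨max 1 (((|c₁| + 1) / c) ^ (1 / (e - 2))), le_max_left _ _, le_max_right _ _⟩
  have hR0 : (0:ℝ) < R := lt_of_lt_of_le one_pos hR1
  refine ⟨|c₁| * R ^ (2:ℝ), ?_⟩
  rintro _ ⟨h, hh, rfl⟩
  simp only [mem_Ioi] at hh
  show c₁ * h ^ (2:ℝ) - c * h ^ e ≤ |c₁| * R ^ (2:ℝ)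
  by_cases hcase : h ≤ R
  · have h1 : c₁ * h ^ (2:ℝ) ≤ |c₁| * R ^ (2:ℝ) := by
      calc c₁ * h ^ (2:ℝ) ≤ |c₁| * h ^ (2:ℝ) := by
            apply mul_le_mul_of_nonneg_right (le_abs_self _) (Real.rpow_nonneg hh.le _)
        _ ≤ |c₁| * R ^ (2:ℝ) := by
            apply mul_le_mul_of_nonneg_left
              (Real.rpow_le_rpow hh.le hcase (by norm_num)) (abs_nonneg _)
    have h2 : 0 ≤ c * h ^ e := by positivity
    linarith
  · push_neg at hcase
    have hhR : R ≤ h := hcase.le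
    have hh1 : (1:ℝ) ≤ h := hR1.trans hhR
    have key : (|c₁| + 1) * h ^ (2:ℝ) ≤ c * h ^ e := by
      have h3 : h ^ e = h ^ (e - 2) * h ^ (2:ℝ) := by
        rw [← Real.rpow_add hh]; ring_nf
      have h4 : ((|c₁| + 1) / c) ≤ h ^ (e - 2) := by
        have hb : (0:ℝ) ≤ (|c₁| + 1) / c := by positivity
        calc (|c₁| + 1) / c = (((|c₁| + 1) / c) ^ (1 / (e - 2))) ^ (e - 2) := by
              rw [← Real.rpow_mul hb, one_div,
                inv_mul_cancel₀ (by linarith : e - 2 ≠ 0), Real.rpow_one]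
          _ ≤ R ^ (e - 2) := Real.rpow_le_rpow (Real.rpow_nonneg hb _)
              hRb (by linarith)
          _ ≤ h ^ (e - 2) := Real.rpow_le_rpow hR0.le hhR (by linarith)
      calc (|c₁| + 1) * h ^ (2:ℝ) = ((|c₁| + 1) / c) * h ^ (2:ℝ) * c := by
            field_simp
        _ ≤ h ^ (e - 2) * h ^ (2:ℝ) * c := by
            apply mul_le_mul_of_nonneg_right _ hc.le
            exact mul_le_mul_of_nonneg_right h4 (Real.rpow_nonneg hh.le _)
        _ = c * h ^ e := by rw [h3]; ring
    have h5 : c₁ * h ^ (2:ℝ) ≤ |c₁| * h ^ (2:ℝ) :=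
      mul_le_mul_of_nonneg_right (le_abs_self _) (Real.rpow_nonneg hh.le _)
    have h6 : (0:ℝ) ≤ h ^ (2:ℝ) := Real.rpow_nonneg hh.le _
    have h7 : (0:ℝ) ≤ |c₁| * R ^ (2:ℝ) := by positivity
    have h9 : |c₁| * h ^ (2:ℝ) ≤ (|c₁| + 1) * h ^ (2:ℝ) :=
      mul_le_mul_of_nonneg_right (by linarith) h6
    have h10 : c₁ * h ^ (2:ℝ) ≤ c * h ^ e := le_trans (le_trans h5 h9) key
    linarith [h7, h10]

lemma not_bddAbove_sq (d e : ℝ) (hd : 0 < d) :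
    ¬ BddAbove ((fun h => d * h ^ (2:ℝ) - e) '' Ioi 0) := by
  rintro ⟨M, hM⟩
  obtain ⟨h, h1, hble⟩ : ∃ h : ℝ, 1 ≤ h ∧ (|M| + |e| + 1) / d ≤ h :=
    ⟨max 1 ((|M| + |e| + 1) / d), le_max_left _ _, le_max_right _ _⟩
  have h0 : (0:ℝ) < h := lt_of_lt_of_le one_pos h1
  have hmem : d * h ^ (2:ℝ) - e ≤ M := hM ⟨h, h0, rfl⟩
  have h2 : h ^ (2:ℝ) = h * h := by
    rw [show (2:ℝ) = ((2:ℕ):ℝ) by norm_num, Real.rpow_natCast]; ring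
  have h3 : h * h ≥ h * 1 := by nlinarith
  have h4 : d * h ≥ d * ((|M| + |e| + 1) / d) :=
    mul_le_mul_of_nonneg_left hble hd.le
  have h5 : d * ((|M| + |e| + 1) / d) = |M| + |e| + 1 := by field_simp
  have h6 : d * (h * h) ≥ d * h := by nlinarith
  have h8 : |M| + |e| + 1 - e ≤ M := by
    calc |M| + |e| + 1 - e = d * ((|M| + |e| + 1) / d) - e := by rw [h5]
      _ ≤ d * h - e := by linarith
      _ ≤ d * (h * h) - e := by linarith
      _ = d * h ^ (2:ℝ) - e := by rw [h2]
      _ ≤ M := hmem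
  have h7 := le_abs_self M
  have h9 := le_abs_self e
  clear hM hmem h2 h3 h4 h5 h6 hble h0 h1
  linarith

lemma sSup_shape_nonneg (c₁ c₂ c₃ s q : ℝ) (hs : 0 < s) (hq : 0 < q) :
    0 ≤ sSup ((fun h => c₁ * h ^ (2:ℝ) - c₂ * h ^ s - c₃ * h ^ q) '' Ioi 0) := by
  set f : ℝ → ℝ := fun h => c₁ * h ^ (2:ℝ) - c₂ * h ^ s - c₃ * h ^ q with hf
  by_cases hb : BddAbove (f '' Ioi 0)
  · have hlim : Filter.Tendsto f (nhdsWithin 0 (Ioi 0)) (nhds 0) := by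
      have l1 : Filter.Tendsto (fun h : ℝ => h ^ (2:ℝ)) (nhdsWithin 0 (Ioi 0)) (nhds 0) := by
        have := ((Real.continuousAt_rpow_const 0 2 (Or.inr (by norm_num))).continuousWithinAt
          (s := Ioi 0)).tendsto
        simpa [Real.zero_rpow (by norm_num : (2:ℝ) ≠ 0)] using this
      have l2 : Filter.Tendsto (fun h : ℝ => h ^ s) (nhdsWithin 0 (Ioi 0)) (nhds 0) := by
        have := ((Real.continuousAt_rpow_const 0 s (Or.inr hs.le)).continuousWithinAt
          (s := Ioi 0)).tendsto
        simpa [Real.zero_rpow hs.ne'] using this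
      have l3 : Filter.Tendsto (fun h : ℝ => h ^ q) (nhdsWithin 0 (Ioi 0)) (nhds 0) := by
        have := ((Real.continuousAt_rpow_const 0 q (Or.inr hq.le)).continuousWithinAt
          (s := Ioi 0)).tendsto
        simpa [Real.zero_rpow hq.ne'] using this
      have : Filter.Tendsto f (nhdsWithin 0 (Ioi 0))
          (nhds (c₁ * 0 - c₂ * 0 - c₃ * 0)) :=
        ((l1.const_mul c₁).sub (l2.const_mul c₂)).sub (l3.const_mul c₃)
      simpa using this
    refine le_of_tendsto hlim ?_
    filter_upwards [self_mem_nhdsWithin] with h hh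
    exact le_csSup hb ⟨h, hh, rfl⟩
  · rw [Real.sSup_of_not_bddAbove hb]

lemma sSup_shape_ge (c₁ c₂ c₃ s : ℝ) (hs : 0 < s) (hc₃ : 0 ≤ c₃) :
    -c₃ ≤ sSup ((fun h => c₁ * h ^ (2:ℝ) - c₂ * h ^ s - c₃ * h ^ (0:ℝ)) '' Ioi 0) := by
  set f : ℝ → ℝ := fun h => c₁ * h ^ (2:ℝ) - c₂ * h ^ s - c₃ * h ^ (0:ℝ) with hf
  by_cases hb : BddAbove (f '' Ioi 0)
  · have hlim : Filter.Tendsto f (nhdsWithin 0 (Ioi 0)) (nhds (-c₃)) := by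
      have l1 : Filter.Tendsto (fun h : ℝ => h ^ (2:ℝ)) (nhdsWithin 0 (Ioi 0)) (nhds 0) := by
        have := ((Real.continuousAt_rpow_const 0 2 (Or.inr (by norm_num))).continuousWithinAt
          (s := Ioi 0)).tendsto
        simpa [Real.zero_rpow (by norm_num : (2:ℝ) ≠ 0)] using this
      have l2 : Filter.Tendsto (fun h : ℝ => h ^ s) (nhdsWithin 0 (Ioi 0)) (nhds 0) := by
        have := ((Real.continuousAt_rpow_const 0 s (Or.inr hs.le)).continuousWithinAt
          (s := Ioi 0)).tendsto
        simpa [Real.zero_rpow hs.ne'] using this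
      have l3 : Filter.Tendsto (fun h : ℝ => c₃ * h ^ (0:ℝ)) (nhdsWithin 0 (Ioi 0))
          (nhds c₃) := by
        have : (fun h : ℝ => c₃ * h ^ (0:ℝ)) = fun _ : ℝ => c₃ := by
          funext x; rw [Real.rpow_zero, mul_one]
        rw [this]
        exact tendsto_const_nhds
      have : Filter.Tendsto f (nhdsWithin 0 (Ioi 0))
          (nhds (c₁ * 0 - c₂ * 0 - c₃)) :=
        ((l1.const_mul c₁).sub (l2.const_mul c₂)).sub l3
      simpa using this
    refine le_of_tendsto hlim ?_
    filter_upwards [self_mem_nhdsWithin] with h hh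
    exact le_csSup hb ⟨h, hh, rfl⟩
  · rw [Real.sSup_of_not_bddAbove hb]
    linarith

lemma sSup_key (c₁ c₂ c₃ θ s p r t : ℝ) (hc₂ : 0 ≤ c₂) (hc₃ : 0 ≤ c₃)
    (hθ : 1 ≤ θ) (h2s : 2 ≤ s) (hsp : s ≤ p) (hrt : r ≤ t)
    (hreg : 2 < r ∨ (r = 0 ∧ t = 2)) :
    sSup ((fun h => θ ^ (2:ℝ) * c₁ * h ^ (2:ℝ) - θ ^ p * c₂ * h ^ s - θ ^ t * c₃ * h ^ r)
        '' Ioi 0)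
      ≤ sSup ((fun h => c₁ * h ^ (2:ℝ) - c₂ * h ^ s - c₃ * h ^ r) '' Ioi 0) := by
  have hθ0 : (0:ℝ) < θ := lt_of_lt_of_le one_pos hθ
  set f : ℝ → ℝ := fun h => c₁ * h ^ (2:ℝ) - c₂ * h ^ s - c₃ * h ^ r with hf
  set g : ℝ → ℝ := fun h => θ ^ (2:ℝ) * c₁ * h ^ (2:ℝ) - θ ^ p * c₂ * h ^ s
    - θ ^ t * c₃ * h ^ r with hg
  have hpoint : ∀ h ∈ Ioi (0:ℝ), g h ≤ f (θ * h) := by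
    intro h hh
    simp only [mem_Ioi] at hh
    have e1 : (θ * h) ^ (2:ℝ) = θ ^ (2:ℝ) * h ^ (2:ℝ) := Real.mul_rpow hθ0.le hh.le
    have e2 : (θ * h) ^ s = θ ^ s * h ^ s := Real.mul_rpow hθ0.le hh.le
    have e3 : (θ * h) ^ r = θ ^ r * h ^ r := Real.mul_rpow hθ0.le hh.le
    have e4 : θ ^ s ≤ θ ^ p := Real.rpow_le_rpow_of_exponent_le hθ hsp
    have e4' : θ ^ r ≤ θ ^ t := Real.rpow_le_rpow_of_exponent_le hθ hrt
    have e5 : (0:ℝ) ≤ h ^ s := Real.rpow_nonneg hh.le _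
    have e5' : (0:ℝ) ≤ h ^ r := Real.rpow_nonneg hh.le _
    show θ ^ (2:ℝ) * c₁ * h ^ (2:ℝ) - θ ^ p * c₂ * h ^ s - θ ^ t * c₃ * h ^ r
      ≤ c₁ * (θ * h) ^ (2:ℝ) - c₂ * (θ * h) ^ s - c₃ * (θ * h) ^ r
    rw [e1, e2, e3]
    have i1 : θ ^ s * c₂ * h ^ s ≤ θ ^ p * c₂ * h ^ s :=
      mul_le_mul_of_nonneg_right (mul_le_mul_of_nonneg_right e4 hc₂) e5
    have i2 : θ ^ r * c₃ * h ^ r ≤ θ ^ t * c₃ * h ^ r :=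
      mul_le_mul_of_nonneg_right (mul_le_mul_of_nonneg_right e4' hc₃) e5'
    linarith
  by_cases hb : BddAbove (f '' Ioi 0)
  · apply csSup_le (Set.Nonempty.image _ ⟨1, mem_Ioi.mpr one_pos⟩)
    rintro _ ⟨h, hh, rfl⟩
    calc g h ≤ f (θ * h) := hpoint h hh
      _ ≤ sSup (f '' Ioi 0) := le_csSup hb ⟨θ * h, mul_pos hθ0 (mem_Ioi.mp hh), rfl⟩
  · rw [Real.sSup_of_not_bddAbove hb]
    rcases hreg with h2r | ⟨hr0, ht2⟩
    · -- supercritical third term : 2 < r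
      have hc₃0 : c₃ = 0 := by
        by_contra hne
        have hc₃pos : 0 < c₃ := lt_of_le_of_ne hc₃ (Ne.symm hne)
        apply hb
        apply bdd_transfer (g := fun h => c₁ * h ^ (2:ℝ) - c₃ * h ^ r) ?_
          (bddAbove_aux c₁ c₃ hc₃pos r h2r)
        intro h hh
        have : (0:ℝ) ≤ c₂ * h ^ s := mul_nonneg hc₂ (Real.rpow_nonneg (le_of_lt hh) _)
        have e : c₁ * h ^ (2:ℝ) - c₂ * h ^ s - c₃ * h ^ r
            = c₁ * h ^ (2:ℝ) - c₃ * h ^ r - c₂ * h ^ s := by ring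
        show c₁ * h ^ (2:ℝ) - c₂ * h ^ s - c₃ * h ^ r ≤ c₁ * h ^ (2:ℝ) - c₃ * h ^ r
        rw [e]
        exact sub_le_self _ this
      rcases eq_or_lt_of_le h2s with h2s' | h2s'
      · set d : ℝ := θ ^ (2:ℝ) * c₁ - θ ^ p * c₂ with hd
        have hgd : ∀ h ∈ Ioi (0:ℝ), g h = d * h ^ (2:ℝ) - 0 := by
          intro h hh
          show θ ^ (2:ℝ) * c₁ * h ^ (2:ℝ) - θ ^ p * c₂ * h ^ s - θ ^ t * c₃ * h ^ r = _
          rw [← h2s', hc₃0]; ring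
        rcases le_or_gt d 0 with hdle | hdpos
        · apply Real.sSup_le _ le_rfl
          rintro _ ⟨h, hh, rfl⟩
          rw [hgd h hh]
          have : (0:ℝ) ≤ h ^ (2:ℝ) := Real.rpow_nonneg (le_of_lt hh) _
          have := mul_nonpos_iff.mpr (Or.inr ⟨hdle, this⟩)
          linarith
        · have : ¬ BddAbove (g '' Ioi 0) := by
            rw [Set.image_congr hgd]
            exact not_bddAbove_sq d 0 hdpos
          rw [Real.sSup_of_not_bddAbove this]
      · have hc₂0 : c₂ = 0 := by
          by_contra hne
          have hc₂pos : 0 < c₂ := lt_of_le_of_ne hc₂ (Ne.symm hne)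
          apply hb
          apply bdd_transfer (g := fun h => c₁ * h ^ (2:ℝ) - c₂ * h ^ s) ?_
            (bddAbove_aux c₁ c₂ hc₂pos s h2s')
          intro h hh
          have : (0:ℝ) ≤ c₃ * h ^ r := mul_nonneg hc₃ (Real.rpow_nonneg (le_of_lt hh) _)
          show c₁ * h ^ (2:ℝ) - c₂ * h ^ s - c₃ * h ^ r ≤ c₁ * h ^ (2:ℝ) - c₂ * h ^ s
          exact sub_le_self _ this
        have hgd : ∀ h ∈ Ioi (0:ℝ), g h = (θ ^ (2:ℝ) * c₁) * h ^ (2:ℝ) - 0 := by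
          intro h hh
          show θ ^ (2:ℝ) * c₁ * h ^ (2:ℝ) - θ ^ p * c₂ * h ^ s - θ ^ t * c₃ * h ^ r = _
          rw [hc₂0, hc₃0]; ring
        rcases le_or_gt c₁ 0 with hc₁le | hc₁pos
        · apply Real.sSup_le _ le_rfl
          rintro _ ⟨h, hh, rfl⟩
          rw [hgd h hh]
          have h1 : (0:ℝ) ≤ h ^ (2:ℝ) := Real.rpow_nonneg (le_of_lt hh) _
          have h2 : (0:ℝ) < θ ^ (2:ℝ) := Real.rpow_pos_of_pos hθ0 _
          have := mul_nonpos_iff.mpr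
            (Or.inr ⟨mul_nonpos_iff.mpr (Or.inl ⟨h2.le, hc₁le⟩), h1⟩)
          linarith
        · have : ¬ BddAbove (g '' Ioi 0) := by
            rw [Set.image_congr hgd]
            exact not_bddAbove_sq _ 0 (mul_pos (Real.rpow_pos_of_pos hθ0 _) hc₁pos)
          rw [Real.sSup_of_not_bddAbove this]
    · -- constant third term : r = 0, t = 2
      subst hr0 ht2
      rcases eq_or_lt_of_le h2s with h2s' | h2s'
      · set d : ℝ := θ ^ (2:ℝ) * c₁ - θ ^ p * c₂ with hd
        have hgd : ∀ h ∈ Ioi (0:ℝ), g h = d * h ^ (2:ℝ) - θ ^ (2:ℝ) * c₃ := by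
          intro h hh
          show θ ^ (2:ℝ) * c₁ * h ^ (2:ℝ) - θ ^ p * c₂ * h ^ s - θ ^ (2:ℝ) * c₃ * h ^ (0:ℝ)
            = _
          rw [← h2s', Real.rpow_zero]; ring
        rcases le_or_gt d 0 with hdle | hdpos
        · apply Real.sSup_le _ le_rfl
          rintro _ ⟨h, hh, rfl⟩
          rw [hgd h hh]
          have h1 : (0:ℝ) ≤ h ^ (2:ℝ) := Real.rpow_nonneg (le_of_lt hh) _
          have h2 : (0:ℝ) ≤ θ ^ (2:ℝ) * c₃ :=
            mul_nonneg (Real.rpow_pos_of_pos hθ0 _).le hc₃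
          have := mul_nonpos_iff.mpr (Or.inr ⟨hdle, h1⟩)
          linarith
        · have : ¬ BddAbove (g '' Ioi 0) := by
            rw [Set.image_congr hgd]
            exact not_bddAbove_sq d _ hdpos
          rw [Real.sSup_of_not_bddAbove this]
      · have hc₂0 : c₂ = 0 := by
          by_contra hne
          have hc₂pos : 0 < c₂ := lt_of_le_of_ne hc₂ (Ne.symm hne)
          apply hb
          apply bdd_transfer (g := fun h => c₁ * h ^ (2:ℝ) - c₂ * h ^ s) ?_
            (bddAbove_aux c₁ c₂ hc₂pos s h2s')
          intro h hh
          have : (0:ℝ) ≤ c₃ * h ^ (0:ℝ) :=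
            mul_nonneg hc₃ (Real.rpow_nonneg (le_of_lt hh) _)
          show c₁ * h ^ (2:ℝ) - c₂ * h ^ s - c₃ * h ^ (0:ℝ) ≤ c₁ * h ^ (2:ℝ) - c₂ * h ^ s
          exact sub_le_self _ this
        have hgd : ∀ h ∈ Ioi (0:ℝ), g h = (θ ^ (2:ℝ) * c₁) * h ^ (2:ℝ) - θ ^ (2:ℝ) * c₃ := by
          intro h hh
          show θ ^ (2:ℝ) * c₁ * h ^ (2:ℝ) - θ ^ p * c₂ * h ^ s - θ ^ (2:ℝ) * c₃ * h ^ (0:ℝ)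
            = _
          rw [hc₂0, Real.rpow_zero]; ring
        rcases le_or_gt c₁ 0 with hc₁le | hc₁pos
        · apply Real.sSup_le _ le_rfl
          rintro _ ⟨h, hh, rfl⟩
          rw [hgd h hh]
          have h1 : (0:ℝ) ≤ h ^ (2:ℝ) := Real.rpow_nonneg (le_of_lt hh) _
          have h2 : (0:ℝ) < θ ^ (2:ℝ) := Real.rpow_pos_of_pos hθ0 _
          have h3 : (0:ℝ) ≤ θ ^ (2:ℝ) * c₃ := mul_nonneg h2.le hc₃
          have := mul_nonpos_iff.mpr
            (Or.inr ⟨mul_nonpos_iff.mpr (Or.inl ⟨h2.le, hc₁le⟩), h1⟩)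
          linarith
        · have : ¬ BddAbove (g '' Ioi 0) := by
            rw [Set.image_congr hgd]
            exact not_bddAbove_sq _ _ (mul_pos (Real.rpow_pos_of_pos hθ0 _) hc₁pos)
          rw [Real.sSup_of_not_bddAbove this]

theorem stmt_8 (N : ℕ) (hN : 3 ≤ N) (p : ℝ) (hp1 : 2 + 4 / N ≤ p) (hp2 : p < 2 * N / (N - 2))
    (μ : ℝ) (hμ : 0 < μ) (m : ℝ → ℝ)
    -- m a is the infimum of J over the Pohozaev manifold
    (hmP : ∀ a : ℝ, 0 < a → m a = sInf (Jfun N μ p ''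
      {u | H1 N u ∧ (∫ x, (u x) ^ 2) = a ^ 2 ∧
        (∫ x, ‖fderiv ℝ u x‖ ^ 2)
          = μ * (N * (p - 2) / (2 * p)) * (∫ x, |u x| ^ p)
            + ∫ x, |u x| ^ (2 * N / (N - 2))}))
    -- the minimax characterization  m a = inf_{u ∈ S_a} sup_{h>0} J(u_h)
    (hmM : ∀ a : ℝ, 0 < a → m a = sInf
      ((fun u => sSup ((fun h => Jfun N μ p (scale N u h)) '' Set.Ioi (0 : ℝ))) ''
        {u | H1 N u ∧ (∫ x, (u x) ^ 2) = a ^ 2})) :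
    ∀ a₁ a₂ : ℝ, 0 < a₁ → a₁ < a₂ → m a₂ ≤ m a₁ := by
  clear hmP
  intro a₁ a₂ ha₁ hlt
  have ha₂ : 0 < a₂ := ha₁.trans hlt
  -- numeric facts
  have hN3 : (3:ℝ) ≤ (N:ℝ) := by exact_mod_cast hN
  have hN0 : (0:ℝ) < (N:ℝ) := by linarith
  have hN2 : (0:ℝ) < (N:ℝ) - 2 := by linarith
  set q : ℝ := 2 * (N:ℝ) / ((N:ℝ) - 2) with hqdef
  have hq0 : (0:ℝ) < q := by rw [hqdef]; positivity
  have hp0 : (0:ℝ) < p := by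
    have : (0:ℝ) < 2 + 4 / N := by positivity
    linarith
  set sE : ℝ := (N:ℝ) * p / 2 - N with hsEdef
  have hs2 : (2:ℝ) ≤ sE := by
    have h1 : (N:ℝ) * (2 + 4 / (N:ℝ)) ≤ (N:ℝ) * p :=
      mul_le_mul_of_nonneg_left hp1 hN0.le
    have h2 : (N:ℝ) * (2 + 4 / (N:ℝ)) = 2 * N + 4 := by field_simp
    rw [hsEdef]; linarith
  have hsp : sE ≤ p := by
    have h1 : p * ((N:ℝ) - 2) < 2 * N := by
      rw [← lt_div_iff₀ hN2]; exact hp2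
    rw [hsEdef]; nlinarith
  have hsE0 : (0:ℝ) < sE := by linarith
  -- the (natural) critical exponent
  set kR : ℝ := ((2 * N / (N - 2) : ℕ) : ℝ) with hkR
  set r : ℝ := (N:ℝ) * kR / 2 - N with hrdef
  -- regimes for the critical term
  have hreg : (2 < r ∧ r ≤ kR) ∨ (r = 0 ∧ kR = 2) := by
    rcases le_or_gt 7 N with h7 | h7
    · right
      have hk2 : (2 * N / (N - 2) : ℕ) = 2 :=
        Nat.div_eq_of_lt_le (by omega) (by omega)
      have : kR = 2 := by rw [hkR, hk2]; norm_num
      constructor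
      · rw [hrdef, this]; ring
      · exact this
    · left
      have hN6 : N ≤ 6 := by omega
      interval_cases N <;>
        simp only [hrdef, hkR] <;> norm_num
  have hrt : r ≤ kR := by
    rcases hreg with ⟨-, h⟩ | ⟨h1, h2⟩
    · exact h
    · rw [h1, h2]; norm_num
  have hreg' : 2 < r ∨ (r = 0 ∧ kR = 2) := by
    rcases hreg with ⟨h, -⟩ | h
    · exact Or.inl h
    · exact Or.inr h
  set θ : ℝ := a₂ / a₁ with hθdef
  have hθ1 : (1:ℝ) < θ := (one_lt_div ha₁).mpr hlt
  have hθ0 : (0:ℝ) < θ := lt_trans one_pos hθ1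
  rw [hmM a₂ ha₂, hmM a₁ ha₁]
  set F : (EuclideanSpace ℝ (Fin N) → ℝ) → ℝ :=
    fun u => sSup ((fun h => Jfun N μ p (scale N u h)) '' Set.Ioi (0 : ℝ)) with hF
  set S₁ : Set (EuclideanSpace ℝ (Fin N) → ℝ) :=
    {u | H1 N u ∧ (∫ x, (u x) ^ 2) = a₁ ^ 2} with hS₁
  set S₂ : Set (EuclideanSpace ℝ (Fin N) → ℝ) :=
    {u | H1 N u ∧ (∫ x, (u x) ^ 2) = a₂ ^ 2} with hS₂
  -- convert the natural-power integrals to rpow form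
  have hCeq : ∀ w : EuclideanSpace ℝ (Fin N) → ℝ,
      (∫ x, |w x| ^ (2 * N / (N - 2))) = ∫ x, |w x| ^ kR := by
    intro w
    rw [hkR]
    exact integral_congr_ae (Filter.Eventually.of_forall fun x =>
      (Real.rpow_natCast _ _).symm)
  -- map from S₁ to S₂
  have hmap : ∀ u ∈ S₁, (fun x => θ * u x) ∈ S₂ := by
    rintro u ⟨hu, hmass⟩
    refine ⟨H1_constmul N u θ hu, ?_⟩
    rw [int_sq_constmul N u θ, hmass, hθdef]
    field_simp
  -- fiber description
  have hfiber : ∀ u : EuclideanSpace ℝ (Fin N) → ℝ, Differentiable ℝ u →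
      ∀ h ∈ Set.Ioi (0:ℝ), Jfun N μ p (scale N u h)
        = ((1/2) * ∫ x, ‖fderiv ℝ u x‖ ^ 2) * h ^ (2:ℝ)
          - ((μ/p) * ∫ x, |u x| ^ p) * h ^ sE
          - ((1/q) * ∫ x, |u x| ^ kR) * h ^ r := by
    intro u hu h hh
    simp only [Set.mem_Ioi] at hh
    have e1 := int_grad_scale N u hu h hh
    have e2 := int_abs_scale N u h p hh
    have e3 := int_abs_scale N u h kR hh
    simp only [Jfun]
    rw [← hqdef, hCeq (scale N u h), e1, e2, e3, hsEdef, hrdef]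
    ring
  -- the scaled fiber description
  have hfiber₂ : ∀ u : EuclideanSpace ℝ (Fin N) → ℝ, Differentiable ℝ u →
      ∀ h ∈ Set.Ioi (0:ℝ),
      Jfun N μ p (scale N (fun x => θ * u x) h)
        = θ ^ (2:ℝ) * ((1/2) * ∫ x, ‖fderiv ℝ u x‖ ^ 2) * h ^ (2:ℝ)
          - θ ^ p * ((μ/p) * ∫ x, |u x| ^ p) * h ^ sE
          - θ ^ kR * ((1/q) * ∫ x, |u x| ^ kR) * h ^ r := by
    intro u hu h hh
    simp only [Set.mem_Ioi] at hh
    have hscale : scale N (fun x => θ * u x) h = fun x => θ * scale N u h x := by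
      funext x
      show h ^ ((N:ℝ)/2) * (θ * u (h • x)) = θ * (h ^ ((N:ℝ)/2) * u (h • x))
      ring
    have hw : Differentiable ℝ (scale N u h) := diff_scale N u hu h
    have e1 := int_grad_constmul N (scale N u h) hw θ hθ0.le
    have e2 := int_abs_constmul N (scale N u h) θ p hθ0.le
    have e3 := int_abs_constmul N (scale N u h) θ kR hθ0.le
    have f1 := int_grad_scale N u hu h hh
    have f2 := int_abs_scale N u h p hh
    have f3 := int_abs_scale N u h kR hh
    rw [hscale]
    simp only [Jfun]
    rw [← hqdef, hCeq (fun x => θ * scale N u h x), e1, e2, e3, f1, f2, f3, hsEdef, hrdef]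
    ring
  -- key comparison : F (θ • u) ≤ F u for u ∈ S₁
  have hkey : ∀ u ∈ S₁, F (fun x => θ * u x) ≤ F u := by
    intro u huS
    have hu : Differentiable ℝ u := huS.1.2.1
    have hBnn : 0 ≤ ∫ x, |u x| ^ p :=
      integral_nonneg fun x => Real.rpow_nonneg (abs_nonneg _) _
    have hCnn : 0 ≤ ∫ x, |u x| ^ kR :=
      integral_nonneg fun x => Real.rpow_nonneg (abs_nonneg _) _
    have img1 : (fun h => Jfun N μ p (scale N u h)) '' Set.Ioi (0:ℝ)
        = (fun h => ((1/2) * ∫ x, ‖fderiv ℝ u x‖ ^ 2) * h ^ (2:ℝ)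
          - ((μ/p) * ∫ x, |u x| ^ p) * h ^ sE
          - ((1/q) * ∫ x, |u x| ^ kR) * h ^ r) '' Set.Ioi 0 :=
      Set.image_congr (hfiber u hu)
    have img2 : (fun h => Jfun N μ p (scale N (fun x => θ * u x) h)) '' Set.Ioi (0:ℝ)
        = (fun h => θ ^ (2:ℝ) * ((1/2) * ∫ x, ‖fderiv ℝ u x‖ ^ 2) * h ^ (2:ℝ)
          - θ ^ p * ((μ/p) * ∫ x, |u x| ^ p) * h ^ sE
          - θ ^ kR * ((1/q) * ∫ x, |u x| ^ kR) * h ^ r) '' Set.Ioi 0 :=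
      Set.image_congr (hfiber₂ u hu)
    show sSup ((fun h => Jfun N μ p (scale N (fun x => θ * u x) h)) '' Set.Ioi (0:ℝ))
      ≤ sSup ((fun h => Jfun N μ p (scale N u h)) '' Set.Ioi (0:ℝ))
    rw [img1, img2]
    exact sSup_key _ _ _ θ sE p r kR
      (mul_nonneg (div_nonneg hμ.le hp0.le) hBnn)
      (mul_nonneg (by positivity) hCnn) hθ1.le hs2 hsp hrt hreg'
  -- uniform lower bound for F on S₂
  have hFlb : ∀ v ∈ S₂, -((1/q) * a₂ ^ 2) ≤ F v := by
    rintro v ⟨hv, hmass⟩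
    have hvd : Differentiable ℝ v := hv.2.1
    show -((1/q) * a₂ ^ 2)
      ≤ sSup ((fun h => Jfun N μ p (scale N v h)) '' Set.Ioi (0:ℝ))
    rw [Set.image_congr (hfiber v hvd)]
    rcases hreg' with h2r | ⟨hr0, hk2⟩
    · have h1 : (0:ℝ) ≤ (1/q) * a₂ ^ 2 := by positivity
      have h2 := sSup_shape_nonneg ((1/2) * ∫ x, ‖fderiv ℝ v x‖ ^ 2)
        ((μ/p) * ∫ x, |v x| ^ p) ((1/q) * ∫ x, |v x| ^ kR) sE r hsE0 (by linarith)
      linarith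
    · have hCv : (∫ x, |v x| ^ kR) = a₂ ^ 2 := by
        rw [← hmass]
        rw [hk2]
        refine integral_congr_ae (Filter.Eventually.of_forall fun x => ?_)
        show |v x| ^ (2:ℝ) = v x ^ 2
        rw [Real.rpow_two, sq_abs]
      rw [hr0, hCv]
      exact sSup_shape_ge _ _ _ sE hsE0 (by positivity)
  have hbb : BddBelow (F '' S₂) := by
    refine ⟨-((1/q) * a₂ ^ 2), ?_⟩
    rintro _ ⟨v, hv, rfl⟩
    exact hFlb v hv
  rcases Set.eq_empty_or_nonempty S₁ with hS₁e | hS₁ne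
  · -- S₁ empty ⇒ S₂ empty, both infima are 0
    have hS₂e : S₂ = ∅ := by
      rw [Set.eq_empty_iff_forall_notMem]
      rintro u ⟨hu, hmass⟩
      have : (fun x => (a₁/a₂) * u x) ∈ S₁ := by
        refine ⟨H1_constmul N u _ hu, ?_⟩
        rw [int_sq_constmul N u _, hmass]
        field_simp
      rw [hS₁e] at this
      exact this
    rw [hS₁e, hS₂e, Set.image_empty]
  · apply le_csInf (hS₁ne.image F)
    rintro b ⟨u, huS, rfl⟩
    calc sInf (F '' S₂) ≤ F (fun x => θ * u x) :=
          csInf_le hbb ⟨_, hmap u huS, rfl⟩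
      _ ≤ F u := hkey u huS
end

section
/- Let N ≥ 3, μ > 0, a > 0, p̂ = 2 + 4/N ≤ p < 2* = 2N/(N−2), γ_p = N(p−2)/(2p). Let {u_n} ⊂ H¹(ℝᴺ) with ‖u_n‖₂ = a satisfy, for some m > 0: ‖∇u_n‖₂² + b_n − (2μ/p)‖u_n‖_p^p − (2/2*)‖u_n‖_{2*}^{2*} = 2m + o(1) and ‖∇u_n‖₂² − f_n − μγ_p‖u_n‖_p^p − ‖u_n‖_{2*}^{2*} = o(1), where |b_n| ≤ σ₁‖∇u_n‖₂², |(1/2)b_n + (1/(pγ_p))f_n| ≤ σ₂‖∇u_n‖₂², and p > p̂ with σ₂ < 1/2 − 1/(pγ_p). Then {‖∇u_n‖₂} is bounded, and hence {u_n} is bounded in H¹(ℝᴺ). -/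
open MeasureTheory Filter
open scoped Topology

set_option maxHeartbeats 1000000 in
theorem stmt_13 (N : ℕ) (hN : 3 ≤ N) (p : ℝ) (hp1 : 2 + 4 / N < p) (hp2 : p < 2 * N / (N - 2))
    (μ a m σ₁ σ₂ : ℝ) (hμ : 0 < μ) (ha : 0 < a) (hm : 0 < m)
    (hσ₂ : σ₂ < 1 / 2 - 1 / (p * (N * (p - 2) / (2 * p))))
    (u : ℕ → EuclideanSpace ℝ (Fin N) → ℝ) (b f : ℕ → ℝ)
    (hmass : ∀ n, (∫ x, (u n x) ^ 2) = a ^ 2)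
    (hE : Tendsto (fun n =>
        (∫ x, ‖fderiv ℝ (u n) x‖ ^ 2) + b n
          - (2 * μ / p) * (∫ x, |u n x| ^ p)
          - (2 / (2 * N / (N - 2))) * (∫ x, |u n x| ^ (2 * N / (N - 2)))
          - 2 * m) atTop (𝓝 0))
    (hP : Tendsto (fun n =>
        (∫ x, ‖fderiv ℝ (u n) x‖ ^ 2) - f n
          - μ * (N * (p - 2) / (2 * p)) * (∫ x, |u n x| ^ p)
          - ∫ x, |u n x| ^ (2 * N / (N - 2))) atTop (𝓝 0))
    (hb : ∀ n, |b n| ≤ σ₁ * ∫ x, ‖fderiv ℝ (u n) x‖ ^ 2)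
    (hbf : ∀ n, |(1 / 2 : ℝ) * b n + (1 / (p * (N * (p - 2) / (2 * p)))) * f n|
        ≤ σ₂ * ∫ x, ‖fderiv ℝ (u n) x‖ ^ 2) :
    (∃ M : ℝ, ∀ n, (∫ x, ‖fderiv ℝ (u n) x‖ ^ 2) ≤ M) ∧
    (∃ M : ℝ, ∀ n, (∫ x, (u n x) ^ 2) + (∫ x, ‖fderiv ℝ (u n) x‖ ^ 2) ≤ M) := by
  have hN3 : (3 : ℝ) ≤ (N : ℝ) := by exact_mod_cast hN
  have hNpos : (0 : ℝ) < (N : ℝ) := by linarith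
  have hN2 : (0 : ℝ) < (N : ℝ) - 2 := by linarith
  have hp2' : (2 : ℝ) < p := by
    have h4 : (0 : ℝ) < 4 / (N : ℝ) := by positivity
    linarith
  have hp0 : (0 : ℝ) < p := by linarith
  set γ : ℝ := (N : ℝ) * (p - 2) / (2 * p) with hγ
  have hγpos : 0 < γ := by
    have h2 : (0:ℝ) < p - 2 := by linarith
    rw [hγ]; positivity
  set q : ℝ := p * γ with hqdef
  have hq : q = (N : ℝ) * (p - 2) / 2 := by
    rw [hqdef, hγ]; field_simp
  have hq2 : (2 : ℝ) < q := by
    rw [hq]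
    have h1 : 2 + 4 / (N : ℝ) < p := hp1
    have h2 : (N : ℝ) * (2 + 4 / N) = 2 * N + 4 := by field_simp
    nlinarith [mul_lt_mul_of_pos_left h1 hNpos]
  have hqpos : (0 : ℝ) < q := by linarith
  set s : ℝ := 2 * (N : ℝ) / ((N : ℝ) - 2) with hs
  have hspos : (0 : ℝ) < s := by rw [hs]; positivity
  have hqs : q ≤ s := by
    have hps : p * ((N : ℝ) - 2) < 2 * N := by
      have h := hp2
      rw [hs] at h
      exact (lt_div_iff₀ hN2).mp h
    rw [hq, hs, div_le_div_iff₀ (by norm_num) hN2]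
    nlinarith
  have hc : (0 : ℝ) < 1 - 2 / q - 2 * σ₂ := by
    have h1q : 1 / q < 1 / 2 - σ₂ := by linarith
    have : 2 / q = 2 * (1 / q) := by ring
    linarith
  -- combined sequence
  have hτ : Tendsto (fun n =>
      ((∫ x, ‖fderiv ℝ (u n) x‖ ^ 2) + b n
          - (2 * μ / p) * (∫ x, |u n x| ^ p)
          - (2 / s) * (∫ x, |u n x| ^ (2 * N / (N - 2)))
          - 2 * m)
        - (2 / q) * ((∫ x, ‖fderiv ℝ (u n) x‖ ^ 2) - f n
          - μ * γ * (∫ x, |u n x| ^ p)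
          - ∫ x, |u n x| ^ (2 * N / (N - 2)))) atTop (𝓝 (0 - (2 / q) * 0)) :=
    hE.sub (hP.const_mul _)
  rw [show (0 : ℝ) - (2 / q) * 0 = 0 by ring] at hτ
  obtain ⟨T, hT⟩ := hτ.bddAbove_range
  have hT' : ∀ n, ((∫ x, ‖fderiv ℝ (u n) x‖ ^ 2) + b n
          - (2 * μ / p) * (∫ x, |u n x| ^ p)
          - (2 / s) * (∫ x, |u n x| ^ (2 * N / (N - 2)))
          - 2 * m)
        - (2 / q) * ((∫ x, ‖fderiv ℝ (u n) x‖ ^ 2) - f n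
          - μ * γ * (∫ x, |u n x| ^ p)
          - ∫ x, |u n x| ^ (2 * N / (N - 2))) ≤ T := by
    intro n
    exact hT ⟨n, rfl⟩
  -- key algebraic identity
  have hid : ∀ d pp e bn fn : ℝ,
      ((d + bn - (2 * μ / p) * pp - (2 / s) * e - 2 * m)
        - (2 / q) * (d - fn - μ * γ * pp - e))
      = (1 - 2 / q) * d + (bn + (2 / q) * fn) + (2 / q - 2 / s) * e - 2 * m := by
    intro d pp e bn fn
    rw [hqdef]
    field_simp
    ring
  have key : ∀ n, (∫ x, ‖fderiv ℝ (u n) x‖ ^ 2) ≤ (2 * m + T) / (1 - 2 / q - 2 * σ₂) := by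
    intro n
    have hEnn : (0 : ℝ) ≤ ∫ x, |u n x| ^ (2 * N / (N - 2)) :=
      integral_nonneg fun x => by positivity
    have hineq := hT' n
    rw [hid] at hineq
    have hδ : 0 ≤ 2 / q - 2 / s := by
      have := div_le_div_of_nonneg_left (by norm_num : (0:ℝ) ≤ 2) hqpos hqs
      linarith
    have hbfn' : -(σ₂ * ∫ x, ‖fderiv ℝ (u n) x‖ ^ 2)
        ≤ (1 / 2 : ℝ) * b n + (1 / q) * f n := (abs_le.mp (hbf n)).1
    have h3 : (2:ℝ) * ((1 / 2 : ℝ) * b n + (1 / q) * f n) = b n + 2 / q * f n := by ring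
    have h2 : -(2 * (σ₂ * ∫ x, ‖fderiv ℝ (u n) x‖ ^ 2)) ≤ b n + 2 / q * f n := by linarith
    have h4 : (0:ℝ) ≤ (2 / q - 2 / s) * ∫ x, |u n x| ^ (2 * N / (N - 2)) :=
      mul_nonneg hδ hEnn
    rw [le_div_iff₀ hc]
    have h5 : (∫ x, ‖fderiv ℝ (u n) x‖ ^ 2) * (1 - 2 / q - 2 * σ₂)
        = (1 - 2 / q) * (∫ x, ‖fderiv ℝ (u n) x‖ ^ 2)
          - 2 * (σ₂ * ∫ x, ‖fderiv ℝ (u n) x‖ ^ 2) := by ring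
    rw [h5]
    linarith
  constructor
  · exact ⟨(2 * m + T) / (1 - 2 / q - 2 * σ₂), key⟩
  · refine ⟨a ^ 2 + (2 * m + T) / (1 - 2 / q - 2 * σ₂), fun n => ?_⟩
    rw [hmass n]
    linarith [key n]
end
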